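/- arXiv:1408.2554 — 5 statements merged into one kernel-verified Lean document; each statement's English description precedes it below -/
import Mathlib

section
/- If Γ is a relational structure whose automorphism group is 2-transitive (i.e., acts transitively on ordered pairs of distinct elements) and Γ has an endomorphism that is not injective, then Γ has a constant endomorphism (obtained in the closure of the monoid generated by the non-injective endomorphism together with the automorphisms). -/
/-!
If `e a = e b` with `a ≠ b`, then by 2-transitivity every pair of distinct points is first moved
onto `(a, b)` by an automorphism and then identified by `e`. Merging the points of a finite set
one at a time into the value `e a` gives, for every finite set, an endomorphism constant on it;
the constant map with value `e a` is then a pointwise limit of endomorphisms.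
-/

theorem exists_mem_collapse_pair {D : Type*} {E A : Set (D → D)} (hAE : A ⊆ E)
    (h2trans : ∀ a b c d : D, a ≠ b → c ≠ d → ∃ g ∈ A, g a = c ∧ g b = d)
    (hcomp : ∀ f ∈ E, ∀ g ∈ E, (f ∘ g) ∈ E) {e : D → D} (he : e ∈ E) {a b : D} (hab : a ≠ b)
    (heq : e a = e b) {p q : D} (hpq : p ≠ q) : ∃ h ∈ E, h p = e a ∧ h q = e a := by
  obtain ⟨α, hαA, hαp, hαq⟩ := h2trans p q a b hpq hab
  exact ⟨e ∘ α, hcomp _ he _ (hAE hαA), by simp [hαp], by simp [hαq, heq]⟩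

theorem exists_mem_collapse_finset {D : Type*} {E : Set (D → D)}
    (hcomp : ∀ f ∈ E, ∀ g ∈ E, (f ∘ g) ∈ E) {g₀ : D → D} (hg₀ : g₀ ∈ E) {c : D}
    (hmerge : ∀ q, q ≠ c → ∃ h ∈ E, h c = c ∧ h q = c) (F : Finset D) :
    ∃ g ∈ E, ∀ x ∈ F, g x = c := by
  classical
  induction F using Finset.induction_on with
  | empty => exact ⟨g₀, hg₀, by simp⟩
  | @insert x F _ ih =>
    obtain ⟨g, hgE, hg⟩ := ih
    by_cases hgx : g x = c
    · exact ⟨g, hgE, by simpa [hgx] using hg⟩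
    · obtain ⟨h, hhE, hhc, hhx⟩ := hmerge (g x) hgx
      refine ⟨h ∘ g, hcomp _ hhE _ hgE, ?_⟩
      simp only [Finset.mem_insert, forall_eq_or_imp, Function.comp_apply, hhx, true_and]
      exact fun y hy => by rw [hg y hy, hhc]

theorem stmt0_general {D : Type*} (E A : Set (D → D))
    (hAE : A ⊆ E)
    (h2trans : ∀ a b c d : D, a ≠ b → c ≠ d → ∃ g ∈ A, g a = c ∧ g b = d)
    (hcomp : ∀ f ∈ E, ∀ g ∈ E, (f ∘ g) ∈ E)
    (hclosed : ∀ f : D → D, (∀ F : Finset D, ∃ g ∈ E, ∀ x ∈ F, g x = f x) → f ∈ E)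
    (hnoninj : ∃ e ∈ E, ¬ Function.Injective e) :
    ∃ e ∈ E, ∃ d : D, ∀ x : D, e x = d := by
  obtain ⟨e, he, hninj⟩ := hnoninj
  obtain ⟨a, b, heq, hab⟩ := Function.not_injective_iff.mp hninj
  have hmerge : ∀ q, q ≠ e a → ∃ h ∈ E, h (e a) = e a ∧ h q = e a := fun q hq =>
    exists_mem_collapse_pair hAE h2trans hcomp he hab heq (Ne.symm hq)
  exact ⟨fun _ => e a, hclosed _ (exists_mem_collapse_finset hcomp he hmerge), e a,
    fun _ => rfl⟩

/-- If a relational structure Γ (endomorphism monoid `E`, automorphisms `A`) has a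
2-transitive automorphism group and a non-injective endomorphism, then it has a
constant endomorphism. -/
theorem stmt0 {D : Type*} (E A : Set (D → D))
    (hAE : A ⊆ E)
    (hAbij : ∀ g ∈ A, Function.Bijective g)
    (h2trans : ∀ a b c d : D, a ≠ b → c ≠ d → ∃ g ∈ A, g a = c ∧ g b = d)
    (hid : id ∈ E)
    (hcomp : ∀ f ∈ E, ∀ g ∈ E, (f ∘ g) ∈ E)
    (hclosed : ∀ f : D → D, (∀ F : Finset D, ∃ g ∈ E, ∀ x ∈ F, g x = f x) → f ∈ E)
    (hnoninj : ∃ e ∈ E, ¬ Function.Injective e) :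
    ∃ e ∈ E, ∃ d : D, ∀ x : D, e x = d :=
  stmt0_general E A hAE h2trans hcomp hclosed hnoninj
end

section
/- Let X ⊆ 𝕃, c ∈ X, and let f : 𝕃 → 𝕃 preserve the quaternary relation Q on every 4-element subset of X containing c. Then f preserves Q on all of X. -/
/-- The cone `S^c_a` of `a` at `c`: the class of `a` under E_c(x,y) ⟺ xy|c.
`Cr z x y` denotes C(z;x,y), i.e. xy|z. -/
def cone {L : Type*} (Cr : L → L → L → Prop) (c a : L) : Set L := {x | Cr c x a}

/-- `P|Q`: the sets `P` and `Q` split from each other: every pair from one splits off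
from every point of the other. -/
def splitsSet {L : Type*} (Cr : L → L → L → Prop) (P Q : Set L) : Prop :=
  (∀ p₁ ∈ P, ∀ p₂ ∈ P, ∀ q ∈ Q, Cr q p₁ p₂) ∧ (∀ q₁ ∈ Q, ∀ q₂ ∈ Q, ∀ p ∈ P, Cr p q₁ q₂)

/-- The derived quartet relation `ab:cd`: {a,b} splits from {c,d}, including the
degenerate cases of equalities. -/
def Qrel {L : Type*} (Cr : L → L → L → Prop) (a b c d : L) : Prop :=
  (Cr c a b ∧ Cr d a b) ∨ (Cr a c d ∧ Cr b c d) ∨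
  (a = b ∧ a ≠ c ∧ a ≠ d) ∨ (c = d ∧ c ≠ a ∧ c ≠ b)

/-- `f` preserves `Q` on `X`. -/
def QPreservesOn {L : Type*} (Cr : L → L → L → Prop) (f : L → L) (X : Set L) : Prop :=
  ∀ a ∈ X, ∀ b ∈ X, ∀ u ∈ X, ∀ v ∈ X,
    Qrel Cr a b u v → Qrel Cr (f a) (f b) (f u) (f v)

/-- Common cone conditions (1)–(3) of Definition of the behaviors at a constant `c`:
(1) f(c)|f(A∩S^c_a); (2) f preserves C on each A∩S^c_a; (3) distinct cones have
splitting images. -/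
def ConeConds {L : Type*} (Cr : L → L → L → Prop) (f : L → L) (c : L) (A : Set L) : Prop :=
  (∀ a ∈ A, ∀ x ∈ A ∩ cone Cr c a, ∀ y ∈ A ∩ cone Cr c a, Cr (f c) (f x) (f y)) ∧
  (∀ a ∈ A, ∀ x ∈ A ∩ cone Cr c a, ∀ y ∈ A ∩ cone Cr c a, ∀ z ∈ A ∩ cone Cr c a,
    Cr z x y → Cr (f z) (f x) (f y)) ∧
  (∀ a ∈ A, ∀ b ∈ A, cone Cr c a = cone Cr c b ∨
    splitsSet Cr (f '' (A ∩ cone Cr c a)) (f '' (A ∩ cone Cr c b)))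

/-- `f` behaves as `cut_c` on `A`: cone conditions and, for x,y,z ∈ A with x|yzc and
y|zc: f(x)f(y)f(z)|f(c) and f(x)|f(y)f(z). -/
def CutOn {L : Type*} (Cr : L → L → L → Prop) (f : L → L) (c : L) (A : Set L) : Prop :=
  ConeConds Cr f c A ∧
  ∀ x ∈ A, ∀ y ∈ A, ∀ z ∈ A,
    (Cr x y z ∧ Cr x y c ∧ Cr x z c ∧ Cr y z c) →
    (Cr (f c) (f x) (f y) ∧ Cr (f c) (f x) (f z) ∧ Cr (f c) (f y) (f z) ∧
      Cr (f x) (f y) (f z))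

/-- `f` behaves as `rer_c` on `A`: cone conditions and, for x,y,z ∈ A with x|yzc and
y|zc: f(x)f(y)f(z)|f(c) and f(x)f(y)|f(z). -/
def RerOn {L : Type*} (Cr : L → L → L → Prop) (f : L → L) (c : L) (A : Set L) : Prop :=
  ConeConds Cr f c A ∧
  ∀ x ∈ A, ∀ y ∈ A, ∀ z ∈ A,
    (Cr x y z ∧ Cr x y c ∧ Cr x z c ∧ Cr y z c) →
    (Cr (f c) (f x) (f y) ∧ Cr (f c) (f x) (f z) ∧ Cr (f c) (f y) (f z) ∧
      Cr (f z) (f x) (f y))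

/-- `f` behaves as `tilde-rer_c` on `A`: cone conditions and, for x,y ∈ A with x|yc:
f(y)|f(x)f(c). -/
def TildeRerOn {L : Type*} (Cr : L → L → L → Prop) (f : L → L) (c : L) (A : Set L) : Prop :=
  ConeConds Cr f c A ∧ ∀ x ∈ A, ∀ y ∈ A, Cr x y c → Cr (f y) (f x) (f c)

/-- The automorphisms of (𝕃;C), as self-maps of 𝕃. -/
def AutC {L : Type*} (Cr : L → L → L → Prop) : Set (Function.End L) :=
  {α | Function.Bijective α ∧ ∀ z x y : L, Cr z x y ↔ Cr (α z) (α x) (α y)}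

/-- `A` is `c`-universal: every finite `U` with a marked point `u` can be mapped by an
automorphism of (𝕃;C) into `A ∪ {c}` with `u ↦ c`. -/
def cUniversal {L : Type*} (Cr : L → L → L → Prop) (c : L) (A : Set L) : Prop :=
  ∀ U : Finset L, ∀ u ∈ U, ∃ α ∈ AutC Cr, α u = c ∧ ∀ x ∈ U, α x ∈ A ∪ {c}

/-!
Under the axioms of a C-relation the degenerate clauses of `Qrel` are instances of the two
main ones, so `ab:uv` just means `ab|u ∧ ab|v` or `uv|a ∧ uv|b`, and merging
`xc:uv` and `yc:uv` into `xy:uv` becomes a four-case check.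

Let `ab|u` and `ab|v`, with `c` distinct from `a` and `b`. Either `ab|c`, and then `ab:uc` and
`ab:vc`, or by binary branching `c` is closer to one of `a`, `b` than they are to each other,
and then `ac:uv` and `bc:uv`. Both quartets contain `c`, so their images hold, and merging them
gives `f(a)f(b):f(u)f(v)`.
-/

structure IsCRelation {L : Type*} (Cr : L → L → L → Prop) : Prop where
  symm : ∀ z x y : L, Cr z x y → Cr z y x
  not_rel_swap : ∀ z x y : L, Cr z x y → ¬ Cr y x z
  trans : ∀ z x y w : L, Cr z x y → Cr z y w → Cr z x w
  split : ∀ z x y w : L, Cr z x y → Cr z w y ∨ Cr w x y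
  diag : ∀ z x : L, x ≠ z → Cr z x x

theorem Qrel.swap {L : Type*} {Cr : L → L → L → Prop} {a b u v : L}
    (h : Qrel Cr a b u v) : Qrel Cr u v a b := by
  unfold Qrel at *
  tauto

namespace IsCRelation

variable {L : Type*} {Cr : L → L → L → Prop}

theorem qrel_iff (hC : IsCRelation Cr) {a b u v : L} :
    Qrel Cr a b u v ↔ (Cr u a b ∧ Cr v a b) ∨ (Cr a u v ∧ Cr b u v) := by
  refine ⟨fun h => ?_, fun h => h.elim Or.inl (Or.inr ∘ Or.inl)⟩
  rcases h with h | h | ⟨rfl, hau, hav⟩ | ⟨rfl, hua, hub⟩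
  · exact Or.inl h
  · exact Or.inr h
  · exact Or.inl ⟨hC.diag u a hau, hC.diag v a hav⟩
  · exact Or.inr ⟨hC.diag a u hua, hC.diag b u hub⟩

theorem rel_of_nested (hC : IsCRelation Cr) {z x y w : L} (hxy : Cr z x y) (hxw : Cr y x w) :
    Cr z x w := by
  rcases hC.split y x w z hxw with hzw | hzw
  · rcases hC.split z x y w hxy with hwy | hwy
    · exact absurd (hC.symm _ _ _ hzw) (hC.not_rel_swap _ _ _ hwy)
    · exact absurd hxw (hC.not_rel_swap _ _ _ hwy)
  · exact hzw

theorem qrel_merge_left (hC : IsCRelation Cr) {x y c u v : L}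
    (hx : Qrel Cr x c u v) (hy : Qrel Cr y c u v) : Qrel Cr x y u v := by
  -- `xc|u` and `uv|c` force `uv|x`: otherwise `xv|c` would give `cv|u`, against `uv|c`.
  have cross : ∀ {x}, Cr u x c → Cr c u v → Cr x u v := fun {x} hxc hcuv =>
    (hC.split c u v x hcuv).resolve_left fun hcxv =>
      hC.not_rel_swap _ _ _ (hC.symm _ _ _ <| hC.trans u c x v (hC.symm _ _ _ hxc)
        (hC.rel_of_nested hxc hcxv)) (hC.symm _ _ _ hcuv)
  rw [hC.qrel_iff] at hx hy ⊢
  rcases hx with ⟨hux, hvx⟩ | ⟨hxu, hcu⟩ <;> rcases hy with ⟨huy, hvy⟩ | ⟨hyu, hcu'⟩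
  · exact Or.inl ⟨hC.trans u x c y hux (hC.symm _ _ _ huy),
      hC.trans v x c y hvx (hC.symm _ _ _ hvy)⟩
  · exact Or.inr ⟨cross hux hcu', hyu⟩
  · exact Or.inr ⟨hxu, cross huy hcu⟩
  · exact Or.inr ⟨hxu, hyu⟩

theorem rel_of_not_rel (hC : IsCRelation Cr)
    (hbin : ∀ u v w : L, u ≠ v → u ≠ w → v ≠ w → Cr w u v ∨ Cr v u w ∨ Cr u v w)
    {r p q c : L} (hr : Cr r p q) (hc : ¬ Cr c p q) (hcp : c ≠ p) (hcq : c ≠ q) :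
    Cr r p c ∧ Cr r q c := by
  obtain rfl | hpq := eq_or_ne p q
  · exact absurd (hC.diag c p hcp.symm) hc
  rcases hbin p q c hpq hcp.symm hcq.symm with hcpq | hqpc | hpqc
  · exact absurd hcpq hc
  · exact ⟨hC.rel_of_nested hr hqpc,
      hC.trans r q p c (hC.symm _ _ _ hr) (hC.rel_of_nested hr hqpc)⟩
  · have hr' := hC.symm _ _ _ hr
    exact ⟨hC.trans r p q c hr (hC.rel_of_nested hr' hpqc), hC.rel_of_nested hr' hpqc⟩

theorem qrel_map_of_rel (hC : IsCRelation Cr)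
    (hbin : ∀ u v w : L, u ≠ v → u ≠ w → v ≠ w → Cr w u v ∨ Cr v u w ∨ Cr u v w)
    {X : Set L} {c : L} (hc : c ∈ X) {f : L → L}
    (h4 : ∀ a ∈ X, ∀ b ∈ X, ∀ u ∈ X, ∀ v ∈ X,
      (c = a ∨ c = b ∨ c = u ∨ c = v) →
      Qrel Cr a b u v → Qrel Cr (f a) (f b) (f u) (f v))
    {p q r s : L} (hp : p ∈ X) (hq : q ∈ X) (hr : r ∈ X) (hs : s ∈ X)
    (hcp : c ≠ p) (hcq : c ≠ q) (hrpq : Cr r p q) (hspq : Cr s p q) :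
    Qrel Cr (f p) (f q) (f r) (f s) := by
  by_cases hcpq : Cr c p q
  · have hpqrc := h4 p hp q hq r hr c hc (by simp) (Or.inl ⟨hrpq, hcpq⟩)
    have hpqsc := h4 p hp q hq s hs c hc (by simp) (Or.inl ⟨hspq, hcpq⟩)
    exact (hC.qrel_merge_left hpqrc.swap hpqsc.swap).swap
  · obtain ⟨hrpc, hrqc⟩ := hC.rel_of_not_rel hbin hrpq hcpq hcp hcq
    obtain ⟨hspc, hsqc⟩ := hC.rel_of_not_rel hbin hspq hcpq hcp hcq
    have hpcrs := h4 p hp c hc r hr s hs (by simp) (Or.inl ⟨hrpc, hspc⟩)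
    have hqcrs := h4 q hq c hc r hr s hs (by simp) (Or.inl ⟨hrqc, hsqc⟩)
    exact hC.qrel_merge_left hpcrs hqcrs

end IsCRelation

/-- If `f` preserves the quartet relation `Q` on every 4-element subset of `X`
containing `c`, then `f` preserves `Q` on all of `X`. -/
theorem stmt12 {L : Type*} (Cr : L → L → L → Prop)
    (hsym : ∀ z x y : L, Cr z x y → Cr z y x)
    (hC2 : ∀ z x y : L, Cr z x y → ¬ Cr y x z)
    (htrans : ∀ z x y w : L, Cr z x y → Cr z y w → Cr z x w)
    (hC3 : ∀ z x y w : L, Cr z x y → (Cr z w y ∨ Cr w x y))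
    (hC4 : ∀ z x : L, x ≠ z → Cr z x x)
    (hC8 : ∀ u v w : L, u ≠ v → u ≠ w → v ≠ w → Cr w u v ∨ Cr v u w ∨ Cr u v w)
    (X : Set L) (c : L) (hc : c ∈ X) (f : L → L)
    (h4 : ∀ a ∈ X, ∀ b ∈ X, ∀ u ∈ X, ∀ v ∈ X,
      (c = a ∨ c = b ∨ c = u ∨ c = v) →
      Qrel Cr a b u v → Qrel Cr (f a) (f b) (f u) (f v)) :
    QPreservesOn Cr f X := by
  have hC : IsCRelation Cr := ⟨hsym, hC2, htrans, hC3, hC4⟩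
  intro a ha b hb u hu v hv habuv
  by_cases hc_mem : c = a ∨ c = b ∨ c = u ∨ c = v
  · exact h4 a ha b hb u hu v hv hc_mem habuv
  push Not at hc_mem
  obtain ⟨hca, hcb, hcu, hcv⟩ := hc_mem
  rcases hC.qrel_iff.1 habuv with ⟨huab, hvab⟩ | ⟨hauv, hbuv⟩
  · exact hC.qrel_map_of_rel hC8 hc h4 ha hb hu hv hca hcb huab hvab
  · exact (hC.qrel_map_of_rel hC8 hc h4 hu hv ha hb hcu hcv hauv hbuv).swap
end

section
/- Let X ⊆ 𝕃, a ∈ X, and let f : 𝕃 → 𝕃 preserve Q on X with f(a)|f(X ∖ {a}). Then: (i) f preserves C on X ∩ S^a_x for every x ∈ X ∖ {a}; and (ii) for any x, y ∈ X ∖ {a}, either S^a_x = S^a_y or f(X ∩ S^a_x)|f(X ∩ S^a_y). -/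
/-!
Apply `Q`-preservation to the quartet `uv:sa`. When `uv|s` and `uv|a`, the image is
`f(u)f(v):f(s)f(a)`, and the hypothesis `f(a)|f(X ∖ {a})` rules out every disjunct except
`f(u)f(v)|f(s)`. Two points of one cone at `a` always split off from `a`, and if they lie in a
cone different from that of `s`, they also split off from `s`. This gives both claims.
-/

section Cones

variable {L : Type*} {Cr : L → L → L → Prop}

theorem ne_of_mem_cone (hC2 : ∀ z x y : L, Cr z x y → ¬ Cr y x z)
    (hC4 : ∀ z x : L, x ≠ z → Cr z x x) {a x u : L} (hx : x ≠ a) (hu : u ∈ cone Cr a x) :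
    u ≠ a := by
  rintro rfl
  exact hC2 u u x hu (hC4 x u (Ne.symm hx))

theorem cr_apex_of_mem_cone (hsym : ∀ z x y : L, Cr z x y → Cr z y x)
    (htrans : ∀ z x y w : L, Cr z x y → Cr z y w → Cr z x w) {a x u v : L}
    (hu : u ∈ cone Cr a x) (hv : v ∈ cone Cr a x) : Cr a u v :=
  htrans a u x v hu (hsym _ _ _ hv)

theorem cone_eq_of_cr (hsym : ∀ z x y : L, Cr z x y → Cr z y x)
    (htrans : ∀ z x y w : L, Cr z x y → Cr z y w → Cr z x w) {a x y : L} (hxy : Cr a x y) :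
    cone Cr a x = cone Cr a y :=
  Set.ext fun _ => ⟨fun hp => htrans _ _ _ _ hp hxy, fun hp => htrans _ _ _ _ hp (hsym _ _ _ hxy)⟩

theorem cr_of_mem_cone_of_not_cr (hsym : ∀ z x y : L, Cr z x y → Cr z y x)
    (htrans : ∀ z x y w : L, Cr z x y → Cr z y w → Cr z x w)
    (hC3 : ∀ z x y w : L, Cr z x y → (Cr z w y ∨ Cr w x y)) {a x y u v s : L}
    (hxy : ¬ Cr a x y) (hu : u ∈ cone Cr a x) (hv : v ∈ cone Cr a x) (hs : s ∈ cone Cr a y) :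
    Cr s u v := by
  rcases hC3 a u v s (cr_apex_of_mem_cone hsym htrans hu hv) with hsv | hs_uv
  · exact absurd (htrans a x s y (hsym _ _ _ (htrans a s v x hsv hv)) hs) hxy
  · exact hs_uv

end Cones

namespace QPreservesOn

variable {L : Type*} {Cr : L → L → L → Prop} {f : L → L} {X : Set L} {a : L}

theorem cr_map (hsym : ∀ z x y : L, Cr z x y → Cr z y x)
    (hC2 : ∀ z x y : L, Cr z x y → ¬ Cr y x z) (hC4 : ∀ z x : L, x ≠ z → Cr z x x)
    (hQ : QPreservesOn Cr f X) (ha : a ∈ X)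
    (hsplit : ∀ s ∈ X \ {a}, ∀ t ∈ X \ {a}, Cr (f a) (f s) (f t))
    {u v s : L} (hu : u ∈ X \ {a}) (hv : v ∈ X \ {a}) (hs : s ∈ X \ {a})
    (hs_uv : Cr s u v) (ha_uv : Cr a u v) : Cr (f s) (f u) (f v) := by
  rcases hQ u hu.1 v hv.1 s hs.1 a ha (Or.inl ⟨hs_uv, ha_uv⟩) with
    ⟨h, -⟩ | ⟨h, -⟩ | ⟨huv, hus, -⟩ | ⟨hsa, hsu, -⟩
  · exact h
  · exact absurd (hsym _ _ _ (hsplit u hu s hs)) (hC2 _ _ _ h)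
  · rw [← huv]; exact hC4 _ _ hus
  · rw [hsa]; exact hsplit u hu v hv

theorem cr_image_cone_of_not_cr (hsym : ∀ z x y : L, Cr z x y → Cr z y x)
    (hC2 : ∀ z x y : L, Cr z x y → ¬ Cr y x z)
    (htrans : ∀ z x y w : L, Cr z x y → Cr z y w → Cr z x w)
    (hC3 : ∀ z x y w : L, Cr z x y → (Cr z w y ∨ Cr w x y))
    (hC4 : ∀ z x : L, x ≠ z → Cr z x x)
    (hQ : QPreservesOn Cr f X) (ha : a ∈ X)
    (hsplit : ∀ s ∈ X \ {a}, ∀ t ∈ X \ {a}, Cr (f a) (f s) (f t))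
    {x y : L} (hx : x ≠ a) (hy : y ≠ a) (hxy : ¬ Cr a x y) :
    ∀ p₁ ∈ f '' (X ∩ cone Cr a x), ∀ p₂ ∈ f '' (X ∩ cone Cr a x),
      ∀ q ∈ f '' (X ∩ cone Cr a y), Cr q p₁ p₂ := by
  rintro _ ⟨u, hu, rfl⟩ _ ⟨v, hv, rfl⟩ _ ⟨s, hs, rfl⟩
  exact hQ.cr_map hsym hC2 hC4 ha hsplit ⟨hu.1, ne_of_mem_cone hC2 hC4 hx hu.2⟩
    ⟨hv.1, ne_of_mem_cone hC2 hC4 hx hv.2⟩ ⟨hs.1, ne_of_mem_cone hC2 hC4 hy hs.2⟩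
    (cr_of_mem_cone_of_not_cr hsym htrans hC3 hxy hu.2 hv.2 hs.2)
    (cr_apex_of_mem_cone hsym htrans hu.2 hv.2)

end QPreservesOn

theorem stmt14_general {L : Type*} (Cr : L → L → L → Prop)
    (hsym : ∀ z x y : L, Cr z x y → Cr z y x)
    (hC2 : ∀ z x y : L, Cr z x y → ¬ Cr y x z)
    (htrans : ∀ z x y w : L, Cr z x y → Cr z y w → Cr z x w)
    (hC3 : ∀ z x y w : L, Cr z x y → (Cr z w y ∨ Cr w x y))
    (hC4 : ∀ z x : L, x ≠ z → Cr z x x)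
    (X : Set L) (a : L) (ha : a ∈ X) (f : L → L)
    (hQ : QPreservesOn Cr f X)
    (hsplit : ∀ s ∈ X \ {a}, ∀ t ∈ X \ {a}, Cr (f a) (f s) (f t)) :
    (∀ x ∈ X \ {a}, ∀ u ∈ X ∩ cone Cr a x, ∀ v ∈ X ∩ cone Cr a x,
      ∀ w ∈ X ∩ cone Cr a x, Cr w u v → Cr (f w) (f u) (f v)) ∧
    (∀ x ∈ X \ {a}, ∀ y ∈ X \ {a}, cone Cr a x = cone Cr a y ∨
      splitsSet Cr (f '' (X ∩ cone Cr a x)) (f '' (X ∩ cone Cr a y))) := by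
  constructor
  · intro x hx u hu v hv w hw hw_uv
    exact hQ.cr_map hsym hC2 hC4 ha hsplit ⟨hu.1, ne_of_mem_cone hC2 hC4 hx.2 hu.2⟩
      ⟨hv.1, ne_of_mem_cone hC2 hC4 hx.2 hv.2⟩ ⟨hw.1, ne_of_mem_cone hC2 hC4 hx.2 hw.2⟩
      hw_uv (cr_apex_of_mem_cone hsym htrans hu.2 hv.2)
  · intro x hx y hy
    by_cases hxy : Cr a x y
    · exact Or.inl (cone_eq_of_cr hsym htrans hxy)
    · exact Or.inr ⟨hQ.cr_image_cone_of_not_cr hsym hC2 htrans hC3 hC4 ha hsplit hx.2 hy.2 hxy,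
        hQ.cr_image_cone_of_not_cr hsym hC2 htrans hC3 hC4 ha hsplit hy.2 hx.2
          (fun hyx => hxy (hsym _ _ _ hyx))⟩

/-- If `f` preserves `Q` on `X` and `f(a)|f(X ∖ {a})`, then (i) `f` preserves `C` on
`X ∩ S^a_x` for every `x ∈ X ∖ {a}`, and (ii) images of distinct cones split. -/
theorem stmt14 {L : Type*} (Cr : L → L → L → Prop)
    (hsym : ∀ z x y : L, Cr z x y → Cr z y x)
    (hC2 : ∀ z x y : L, Cr z x y → ¬ Cr y x z)
    (htrans : ∀ z x y w : L, Cr z x y → Cr z y w → Cr z x w)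
    (hC3 : ∀ z x y w : L, Cr z x y → (Cr z w y ∨ Cr w x y))
    (hC4 : ∀ z x : L, x ≠ z → Cr z x x)
    (hC8 : ∀ u v w : L, u ≠ v → u ≠ w → v ≠ w → Cr w u v ∨ Cr v u w ∨ Cr u v w)
    (X : Set L) (a : L) (ha : a ∈ X) (f : L → L)
    (hQ : QPreservesOn Cr f X)
    (hsplit : ∀ s ∈ X \ {a}, ∀ t ∈ X \ {a}, Cr (f a) (f s) (f t)) :
    (∀ x ∈ X \ {a}, ∀ u ∈ X ∩ cone Cr a x, ∀ v ∈ X ∩ cone Cr a x,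
      ∀ w ∈ X ∩ cone Cr a x, Cr w u v → Cr (f w) (f u) (f v)) ∧
    (∀ x ∈ X \ {a}, ∀ y ∈ X \ {a}, cone Cr a x = cone Cr a y ∨
      splitsSet Cr (f '' (X ∩ cone Cr a x)) (f '' (X ∩ cone Cr a y))) :=
  stmt14_general Cr hsym hC2 htrans hC3 hC4 X a ha f hQ hsplit
end

section
/- If f : 𝕃 → 𝕃 behaves as tilde-rer_c on a c-universal set A (i.e., f satisfies conditions (1)–(3) of the cone conditions at c and additionally for all x, y ∈ A with x|yc one has f(y)|f(x)f(c)), then f preserves Q on A. -/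
/-!
Take a quartet `ab:uv` in `A`, say `ab|u` and `ab|v`. If also `ab|c`, then `a` and `b` lie in
one cone at `c`; a point `w ∈ {u, v}` in that cone is handled by condition (2), and one outside
it by condition (3), so `f(a)f(b)|f(w)` either way. Otherwise `c` sits on the side of `u` and
`v`, so `u|ac`, `u|bc`, `v|ac`, `v|bc`, and condition (4) turns these into `f(u)f(v)|f(a)` and
`f(u)f(v)|f(b)`. The degenerate quartets only need `f` to be injective on `A`, which follows
from (2) and (4) because any two distinct points of `A` form a triple with `c`.
-/

section

variable {L : Type*} {Cr : L → L → L → Prop}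

theorem ne_of_cr (hC2 : ∀ z x y : L, Cr z x y → ¬ Cr y x z)
    (hC4 : ∀ z x : L, x ≠ z → Cr z x x) {z x y : L} (h : Cr z x y) : z ≠ x := by
  rintro rfl
  by_cases hzy : z = y
  · subst hzy
    exact hC2 z z z h h
  · exact hC2 z z y h (hC4 y z hzy)

theorem Qrel.comm {a b u v : L} (h : Qrel Cr a b u v) : Qrel Cr u v a b := by
  rcases h with h | h | h | h
  exacts [Or.inr (Or.inl h), Or.inl h, Or.inr (Or.inr (Or.inr h)), Or.inr (Or.inr (Or.inl h))]

namespace TildeRerOn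

variable {f : L → L} {c : L} {A : Set L}

theorem injOn (hsym : ∀ z x y : L, Cr z x y → Cr z y x)
    (hC2 : ∀ z x y : L, Cr z x y → ¬ Cr y x z) (hC4 : ∀ z x : L, x ≠ z → Cr z x x)
    (hC8 : ∀ u v w : L, u ≠ v → u ≠ w → v ≠ w → Cr w u v ∨ Cr v u w ∨ Cr u v w)
    (hA : A ⊆ {x : L | x ≠ c}) (h : TildeRerOn Cr f c A) : Set.InjOn f A := by
  intro x hx y hy hfxy
  by_contra hxy
  rcases hC8 x y c hxy (hA hx) (hA hy) with hxyc | hxcy | hycx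
  · have hxK : x ∈ A ∩ cone Cr c x := ⟨hx, hC4 c x (hA hx)⟩
    have hyK : y ∈ A ∩ cone Cr c x := ⟨hy, hsym c x y hxyc⟩
    exact ne_of_cr hC2 hC4 (h.1.2.1 x hx x hxK x hxK y hyK (hC4 y x hxy)) hfxy.symm
  · exact ne_of_cr hC2 hC4 (h.2 y hy x hx hxcy) hfxy
  · exact ne_of_cr hC2 hC4 (h.2 x hx y hy hycx) hfxy.symm

theorem cr_apply_of_cr_center (hsym : ∀ z x y : L, Cr z x y → Cr z y x)
    (hC4 : ∀ z x : L, x ≠ z → Cr z x x) (hA : A ⊆ {x : L | x ≠ c})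
    (h : TildeRerOn Cr f c A) {a b w : L} (ha : a ∈ A) (hb : b ∈ A) (hw : w ∈ A)
    (habc : Cr c a b) (habw : Cr w a b) : Cr (f w) (f a) (f b) := by
  have haK : a ∈ A ∩ cone Cr c a := ⟨ha, hC4 c a (hA ha)⟩
  have hbK : b ∈ A ∩ cone Cr c a := ⟨hb, hsym c a b habc⟩
  by_cases hwa : Cr c w a
  · exact h.1.2.1 a ha a haK b hbK w ⟨hw, hwa⟩ habw
  · rcases h.1.2.2 a ha w hw with hcone | hsplit
    · exact absurd (hcone ▸ hC4 c w (hA hw) : w ∈ cone Cr c a) hwa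
    · exact hsplit.1 _ ⟨a, haK, rfl⟩ _ ⟨b, hbK, rfl⟩ _ ⟨w, ⟨hw, hC4 c w (hA hw)⟩, rfl⟩

theorem cr_apply_of_not_cr_center (hsym : ∀ z x y : L, Cr z x y → Cr z y x)
    (htrans : ∀ z x y w : L, Cr z x y → Cr z y w → Cr z x w)
    (hC3 : ∀ z x y w : L, Cr z x y → (Cr z w y ∨ Cr w x y))
    (h : TildeRerOn Cr f c A) {a b u v : L} (ha : a ∈ A) (hb : b ∈ A) (hu : u ∈ A)
    (hv : v ∈ A) (habc : ¬ Cr c a b) (habu : Cr u a b) (habv : Cr v a b) :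
    Cr (f a) (f u) (f v) ∧ Cr (f b) (f u) (f v) := by
  have side : ∀ w ∈ A, Cr w a b → Cr (f a) (f w) (f c) ∧ Cr (f b) (f w) (f c) := by
    intro w hw habw
    have hbcw : Cr w b c := hsym w c b ((hC3 w a b c habw).resolve_right habc)
    exact ⟨h.2 w hw a ha (htrans w a b c habw hbcw), h.2 w hw b hb hbcw⟩
  obtain ⟨hau, hbu⟩ := side u hu habu
  obtain ⟨hav, hbv⟩ := side v hv habv
  exact ⟨htrans _ _ _ _ hau (hsym _ _ _ hav), htrans _ _ _ _ hbu (hsym _ _ _ hbv)⟩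

theorem qrel_apply_of_cr (hsym : ∀ z x y : L, Cr z x y → Cr z y x)
    (htrans : ∀ z x y w : L, Cr z x y → Cr z y w → Cr z x w)
    (hC3 : ∀ z x y w : L, Cr z x y → (Cr z w y ∨ Cr w x y))
    (hC4 : ∀ z x : L, x ≠ z → Cr z x x) (hA : A ⊆ {x : L | x ≠ c})
    (h : TildeRerOn Cr f c A) {a b u v : L} (ha : a ∈ A) (hb : b ∈ A) (hu : u ∈ A)
    (hv : v ∈ A) (habu : Cr u a b) (habv : Cr v a b) : Qrel Cr (f a) (f b) (f u) (f v) := by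
  by_cases habc : Cr c a b
  · exact Or.inl ⟨cr_apply_of_cr_center hsym hC4 hA h ha hb hu habc habu,
      cr_apply_of_cr_center hsym hC4 hA h ha hb hv habc habv⟩
  · exact Or.inr (Or.inl
      (cr_apply_of_not_cr_center hsym htrans hC3 h ha hb hu hv habc habu habv))

end TildeRerOn

end

theorem stmt16_general {L : Type*} (Cr : L → L → L → Prop)
    (hsym : ∀ z x y : L, Cr z x y → Cr z y x)
    (hC2 : ∀ z x y : L, Cr z x y → ¬ Cr y x z)
    (htrans : ∀ z x y w : L, Cr z x y → Cr z y w → Cr z x w)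
    (hC3 : ∀ z x y w : L, Cr z x y → (Cr z w y ∨ Cr w x y))
    (hC4 : ∀ z x : L, x ≠ z → Cr z x x)
    (hC8 : ∀ u v w : L, u ≠ v → u ≠ w → v ≠ w → Cr w u v ∨ Cr v u w ∨ Cr u v w)
    (c : L) (A : Set L) (hA : A ⊆ {x : L | x ≠ c})
    (f : L → L)
    (htrer : TildeRerOn Cr f c A) :
    QPreservesOn Cr f A := by
  have hinj := htrer.injOn hsym hC2 hC4 hC8 hA
  intro a ha b hb u hu v hv hq
  rcases hq with ⟨habu, habv⟩ | ⟨huva, huvb⟩ | ⟨rfl, hau, hav⟩ | ⟨rfl, hua, hub⟩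
  · exact htrer.qrel_apply_of_cr hsym htrans hC3 hC4 hA ha hb hu hv habu habv
  · exact (htrer.qrel_apply_of_cr hsym htrans hC3 hC4 hA hu hv ha hb huva huvb).comm
  · exact Or.inr (Or.inr (Or.inl
      ⟨rfl, (hinj.ne_iff ha hu).2 hau, (hinj.ne_iff ha hv).2 hav⟩))
  · exact Or.inr (Or.inr (Or.inr
      ⟨rfl, (hinj.ne_iff hu ha).2 hua, (hinj.ne_iff hu hb).2 hub⟩))

/-- If `f` behaves as `tilde-rer_c` on a `c`-universal set `A`, then `f` preserves `Q`
on `A`. -/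
theorem stmt16 {L : Type*} (Cr : L → L → L → Prop)
    (hsym : ∀ z x y : L, Cr z x y → Cr z y x)
    (hC2 : ∀ z x y : L, Cr z x y → ¬ Cr y x z)
    (htrans : ∀ z x y w : L, Cr z x y → Cr z y w → Cr z x w)
    (hC3 : ∀ z x y w : L, Cr z x y → (Cr z w y ∨ Cr w x y))
    (hC4 : ∀ z x : L, x ≠ z → Cr z x x)
    (hC8 : ∀ u v w : L, u ≠ v → u ≠ w → v ≠ w → Cr w u v ∨ Cr v u w ∨ Cr u v w)
    (c : L) (A : Set L) (hA : A ⊆ {x : L | x ≠ c})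
    (huniv : cUniversal Cr c A) (f : L → L)
    (htrer : TildeRerOn Cr f c A) :
    QPreservesOn Cr f A :=
  stmt16_general Cr hsym hC2 htrans hC3 hC4 hC8 c A hA f htrer
end

section
/- Structure on the image of nil: Let D = nil(𝕃) where nil is an order-preserving function with behavior nil. Then for x, y, z ∈ D, the relation C(x; y, z) (i.e., yz|x) holds if and only if (y ≺ z ≺ x) ∨ (z ≺ y ≺ x) ∨ (y = z ∧ x ≠ y). Consequently, the structure induced on D by (𝕃; C) is first-order definable in the linear order (D; ≺), and (D; ≺) is isomorphic to (ℚ; <). -/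
/-! If `y ≺ z` are in the image of `nil` and `yz|x`, then `x` cannot lie strictly between them
by convexity, and `x ≺ y` is impossible because then `nil` forces `xy|z`, which is incompatible
with `yz|x`. So the `≺`-largest point is the one that splits off. Since `nil` is strictly
monotone, it is an order isomorphism onto its image, which is therefore a copy of `ℚ`. -/

section ImageOfNil

variable {L : Type*} [LinearOrder L] {Cr : L → L → L → Prop} {nil : L → L}

theorem cr_of_lt_of_mem_range (hnilmono : StrictMono nil)
    (hnil : ∀ x y z : L, x < y → y < z → Cr (nil z) (nil x) (nil y))
    {x y z : L} (hx : x ∈ Set.range nil) (hy : y ∈ Set.range nil) (hz : z ∈ Set.range nil)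
    (hyz : y < z) (hzx : z < x) : Cr x y z := by
  obtain ⟨a, rfl⟩ := hx
  obtain ⟨b, rfl⟩ := hy
  obtain ⟨c, rfl⟩ := hz
  exact hnil b c a (hnilmono.lt_iff_lt.mp hyz) (hnilmono.lt_iff_lt.mp hzx)

theorem lt_of_cr_of_mem_range (hsym : ∀ z x y : L, Cr z x y → Cr z y x)
    (hC2 : ∀ z x y : L, Cr z x y → ¬ Cr y x z) (hC5 : ∀ z x : L, ¬ Cr z x z)
    (hC5' : ∀ x y : L, ¬ Cr x x y)
    (hconv : ∀ x y z : L, Cr z x y → x < y → ¬ (x < z ∧ z < y))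
    (hnilmono : StrictMono nil)
    (hnil : ∀ x y z : L, x < y → y < z → Cr (nil z) (nil x) (nil y))
    {x y z : L} (hx : x ∈ Set.range nil) (hy : y ∈ Set.range nil) (hz : z ∈ Set.range nil)
    (hcr : Cr x y z) (hyz : y < z) : z < x := by
  rcases lt_trichotomy x y with hxy | rfl | hyx
  · have hzxy : Cr z x y := cr_of_lt_of_mem_range hnilmono hnil hz hx hy hxy hyz
    exact (hC2 _ _ _ hcr (hsym _ _ _ hzxy)).elim
  · exact (hC5' _ _ hcr).elim
  · refine lt_of_not_ge fun hxz => ?_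
    rcases hxz.eq_or_lt with rfl | hxz
    · exact hC5 _ _ hcr
    · exact hconv _ _ _ hcr hyz ⟨hyx, hxz⟩

theorem cr_iff_of_mem_range (hsym : ∀ z x y : L, Cr z x y → Cr z y x)
    (hC2 : ∀ z x y : L, Cr z x y → ¬ Cr y x z) (hC4 : ∀ z x : L, x ≠ z → Cr z x x)
    (hC5 : ∀ z x : L, ¬ Cr z x z) (hC5' : ∀ x y : L, ¬ Cr x x y)
    (hconv : ∀ x y z : L, Cr z x y → x < y → ¬ (x < z ∧ z < y))
    (hnilmono : StrictMono nil)
    (hnil : ∀ x y z : L, x < y → y < z → Cr (nil z) (nil x) (nil y))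
    {x y z : L} (hx : x ∈ Set.range nil) (hy : y ∈ Set.range nil) (hz : z ∈ Set.range nil) :
    Cr x y z ↔ (y < z ∧ z < x) ∨ (z < y ∧ y < x) ∨ (y = z ∧ x ≠ y) := by
  constructor
  · intro hcr
    rcases lt_trichotomy y z with hyz | rfl | hzy
    · exact Or.inl ⟨hyz,
        lt_of_cr_of_mem_range hsym hC2 hC5 hC5' hconv hnilmono hnil hx hy hz hcr hyz⟩
    · exact Or.inr (Or.inr ⟨rfl, fun hxy => hC5' _ _ (hxy ▸ hcr)⟩)
    · exact Or.inr (Or.inl ⟨hzy,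
        lt_of_cr_of_mem_range hsym hC2 hC5 hC5' hconv hnilmono hnil hx hz hy
          (hsym _ _ _ hcr) hzy⟩)
  · rintro (⟨hyz, hzx⟩ | ⟨hzy, hyx⟩ | ⟨rfl, hxy⟩)
    · exact cr_of_lt_of_mem_range hnilmono hnil hx hy hz hyz hzx
    · exact hsym _ _ _ (cr_of_lt_of_mem_range hnilmono hnil hx hz hy hzy hyx)
    · exact hC4 _ _ hxy.symm

end ImageOfNil

theorem stmt19_general {L : Type*} [LinearOrder L]
    (hiso : Nonempty (L ≃o ℚ))
    (Cr : L → L → L → Prop)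
    (hsym : ∀ z x y : L, Cr z x y → Cr z y x)
    (hC2 : ∀ z x y : L, Cr z x y → ¬ Cr y x z)
    (hC4 : ∀ z x : L, x ≠ z → Cr z x x)
    (hC5 : ∀ z x : L, ¬ Cr z x z)
    (hC5' : ∀ x y : L, ¬ Cr x x y)
    (hconv : ∀ x y z : L, Cr z x y → x < y → ¬ (x < z ∧ z < y))
    (nil : L → L)
    (hnilmono : StrictMono nil)
    (hnil : ∀ x y z : L, x < y → y < z → Cr (nil z) (nil x) (nil y)) :
    (∀ x ∈ Set.range nil, ∀ y ∈ Set.range nil, ∀ z ∈ Set.range nil,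
      (Cr x y z ↔ ((y < z ∧ z < x) ∨ (z < y ∧ y < x) ∨ (y = z ∧ x ≠ y)))) ∧
    Nonempty ({d : L // d ∈ Set.range nil} ≃o ℚ) :=
  ⟨fun _ hx _ hy _ hz => cr_iff_of_mem_range hsym hC2 hC4 hC5 hC5' hconv hnilmono hnil hx hy hz,
    ⟨(hnilmono.orderIso nil).symm.trans hiso.some⟩⟩

/-- Structure on the image of nil: on `D = nil(𝕃)` the C-relation degenerates:
yz|x holds iff (y ≺ z ≺ x) ∨ (z ≺ y ≺ x) ∨ (y = z ∧ x ≠ y); consequently the induced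
structure is definable in the linear order (D;≺), which is isomorphic to (ℚ;<).
`Cr x y z` denotes C(x;y,z), i.e. yz|x. -/
theorem stmt19 {L : Type*} [LinearOrder L]
    (hiso : Nonempty (L ≃o ℚ))
    (Cr : L → L → L → Prop)
    (hsym : ∀ z x y : L, Cr z x y → Cr z y x)
    (hC2 : ∀ z x y : L, Cr z x y → ¬ Cr y x z)
    (hC4 : ∀ z x : L, x ≠ z → Cr z x x)
    (hC5 : ∀ z x : L, ¬ Cr z x z)
    (hC5' : ∀ x y : L, ¬ Cr x x y)
    (htrans : ∀ z x y w : L, Cr z x y → Cr z y w → Cr z x w)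
    (hconv : ∀ x y z : L, Cr z x y → x < y → ¬ (x < z ∧ z < y))
    (nil : L → L)
    (hnilmono : StrictMono nil)
    (hnil : ∀ x y z : L, x < y → y < z → Cr (nil z) (nil x) (nil y)) :
    (∀ x ∈ Set.range nil, ∀ y ∈ Set.range nil, ∀ z ∈ Set.range nil,
      (Cr x y z ↔ ((y < z ∧ z < x) ∨ (z < y ∧ y < x) ∨ (y = z ∧ x ≠ y)))) ∧
    Nonempty ({d : L // d ∈ Set.range nil} ≃o ℚ) :=
  stmt19_general hiso Cr hsym hC2 hC4 hC5 hC5' hconv nil hnilmono hnil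
end
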